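/- Let ν^{α₀} be a measure on ℝ^d satisfying condition (U) with exponent α₀ ∈ (0,2) and constant C_U, and for α ∈ [α₀,2) let ν^α(dx) = ((2-α)/(2-α₀)) |x|^{α₀-α} ν^{α₀}(dx). Then ν^α satisfies condition (U) with exponent α and constant 13·C_U/(2-α₀); in particular the constant is independent of α ∈ [α₀, 2). -/

import Mathlib

/-!
Split `∫ ‖z‖^(α₀-α) (r ∧ ‖z‖)² dν₀` at `‖z‖ = r`. Off the ball `‖z‖^(α₀-α) ≤ r^(α₀-α)`, so
condition (U) for `ν₀` at scale `r` bounds that part by `C r^(2-α)`. On the ball the integrand is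
`‖z‖^(2+α₀-α)`; by the layer cake formula its integral is controlled by the tails
`ν₀ {s ≤ ‖z‖} ≤ C s^(-α₀)`, which (U) gives at every scale `s ≤ 1`, and since `2 + α₀ - α > α₀`
the resulting integral `∫₀^r s^(1-α) ds` converges. Multiplying by `(2-α)/(2-α₀)` gives the
constant `(4 + α₀ - 2α)/(2-α₀) ≤ 4/(2-α₀)`, with no blow-up as `α → 2`.
-/

open MeasureTheory Metric

open scoped ENNReal

theorem lintegral_Ioc_zero_rpow_sub_one {s r : ℝ} (hs : 0 < s) (hr : 0 ≤ r) :
    ∫⁻ t in Set.Ioc 0 r, ENNReal.ofReal (t ^ (s - 1)) = ENNReal.ofReal (r ^ s / s) := by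
  have hint : IntegrableOn (fun t : ℝ => t ^ (s - 1)) (Set.Ioc 0 r) :=
    (intervalIntegrable_iff_integrableOn_Ioc_of_le hr).mp
      (intervalIntegral.intervalIntegrable_rpow' (by linarith))
  rw [← ofReal_integral_eq_lintegral_ofReal hint, ← intervalIntegral.integral_of_le hr,
    integral_rpow (Or.inl (by linarith))]
  · simp [Real.zero_rpow hs.ne']
  · filter_upwards [self_mem_ae_restrict measurableSet_Ioc] with t ht
    exact Real.rpow_nonneg ht.1.le _

theorem ofReal_rpow_norm_mul_min_sq_le {E : Type*} [SeminormedAddCommGroup E] (z : E) {γ r : ℝ}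
    (hγ : γ ≤ 0) (hr : 0 < r) :
    ENNReal.ofReal (‖z‖ ^ γ * min r ‖z‖ ^ 2) ≤
      ENNReal.ofReal (r ^ γ * min r ‖z‖ ^ 2) +
        (ball 0 r).indicator (fun z => ENNReal.ofReal (‖z‖ ^ (2 + γ))) z := by
  rcases lt_or_ge ‖z‖ r with hzr | hrz
  · rw [Set.indicator_of_mem (mem_ball_zero_iff.mpr hzr), min_eq_right hzr.le]
    refine le_add_left (ENNReal.ofReal_le_ofReal ?_)
    rcases (norm_nonneg z).eq_or_lt with hz | hz
    · rw [← hz]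
      simp [Real.rpow_nonneg]
    · rw [Real.rpow_add hz, Real.rpow_two, mul_comm]
  · rw [min_eq_left hrz]
    exact le_add_right (ENNReal.ofReal_le_ofReal
      (mul_le_mul_of_nonneg_right (Real.rpow_le_rpow_of_nonpos hr hrz hγ) (sq_nonneg r)))

section ConditionU

variable {E : Type*} [SeminormedAddCommGroup E] [MeasurableSpace E] [OpensMeasurableSpace E]

def ConditionU (ν : Measure E) (β : ℝ) (C : ℝ≥0∞) : Prop :=
  ∀ r : ℝ, 0 < r → r ≤ 1 →
    ∫⁻ z, ENNReal.ofReal (min r ‖z‖ ^ 2) ∂ν ≤ C * ENNReal.ofReal (r ^ (2 - β))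

theorem ofReal_sq_mul_measure_norm_ge_le_lintegral_min_sq (ν : Measure E) (s : ℝ) :
    ENNReal.ofReal (s ^ 2) * ν {z | s ≤ ‖z‖} ≤ ∫⁻ z, ENNReal.ofReal (min s ‖z‖ ^ 2) ∂ν := by
  refine le_trans (mul_le_mul_right (measure_mono fun z hz => ?_) _)
    (mul_meas_ge_le_lintegral₀ (by fun_prop) _)
  change ENNReal.ofReal (s ^ 2) ≤ ENNReal.ofReal (min s ‖z‖ ^ 2)
  rw [min_eq_left (show s ≤ ‖z‖ from hz)]

variable {ν : Measure E} {β : ℝ} {C : ℝ≥0∞}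

theorem ConditionU.measure_norm_ge_le (h : ConditionU ν β C) {s : ℝ} (hs : 0 < s) (hs1 : s ≤ 1) :
    ν {z | s ≤ ‖z‖} ≤ C * ENNReal.ofReal (s ^ (-β)) := by
  have hs2 : ENNReal.ofReal (s ^ 2) ≠ 0 := by simp [hs.ne']
  refine (ENNReal.mul_le_mul_iff_right hs2 ENNReal.ofReal_ne_top).mp ?_
  calc ENNReal.ofReal (s ^ 2) * ν {z | s ≤ ‖z‖}
      ≤ C * ENNReal.ofReal (s ^ (2 - β)) :=
        (ofReal_sq_mul_measure_norm_ge_le_lintegral_min_sq ν s).trans (h s hs hs1)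
    _ = ENNReal.ofReal (s ^ 2) * (C * ENNReal.ofReal (s ^ (-β))) := by
        rw [mul_left_comm, ← ENNReal.ofReal_mul (by positivity), ← Real.rpow_natCast,
          ← Real.rpow_add hs, Nat.cast_ofNat, sub_eq_add_neg]

theorem ConditionU.setLIntegral_ball_rpow_norm_le (h : ConditionU ν β C) {q r : ℝ} (hq : 0 < q)
    (hβq : β < q) (hr : 0 < r) (hr1 : r ≤ 1) :
    ∫⁻ z in ball 0 r, ENNReal.ofReal (‖z‖ ^ q) ∂ν ≤
      C * ENNReal.ofReal (q / (q - β) * r ^ (q - β)) := by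
  have htail : ∀ t ∈ Set.Ioi (0 : ℝ),
      ν.restrict (ball 0 r) {z | t ≤ ‖z‖} * ENNReal.ofReal (t ^ (q - 1)) ≤
        (Set.Ioc 0 r).indicator (fun t => C * ENNReal.ofReal (t ^ (q - β - 1))) t := by
    intro t (ht : 0 < t)
    rcases le_or_gt t r with htr | htr
    · rw [Set.indicator_of_mem (show t ∈ Set.Ioc 0 r from ⟨ht, htr⟩)]
      calc ν.restrict (ball 0 r) {z | t ≤ ‖z‖} * ENNReal.ofReal (t ^ (q - 1))
          ≤ C * ENNReal.ofReal (t ^ (-β)) * ENNReal.ofReal (t ^ (q - 1)) := by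
            gcongr
            exact (Measure.restrict_le_self _).trans (h.measure_norm_ge_le ht (htr.trans hr1))
        _ = C * ENNReal.ofReal (t ^ (q - β - 1)) := by
            rw [mul_assoc, ← ENNReal.ofReal_mul (by positivity), ← Real.rpow_add ht]
            ring_nf
    · have hempty : {z : E | t ≤ ‖z‖} ∩ ball 0 r = ∅ := by
        ext z
        simp only [Set.mem_inter_iff, Set.mem_empty_iff_false, iff_false, not_and]
        intro (hz : t ≤ ‖z‖)
        rw [mem_ball_zero_iff]
        linarith
      rw [Measure.restrict_apply' measurableSet_ball, hempty, measure_empty, zero_mul]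
      exact zero_le
  calc ∫⁻ z in ball 0 r, ENNReal.ofReal (‖z‖ ^ q) ∂ν
      = ENNReal.ofReal q * ∫⁻ t in Set.Ioi 0,
          ν.restrict (ball 0 r) {z | t ≤ ‖z‖} * ENNReal.ofReal (t ^ (q - 1)) :=
        lintegral_rpow_eq_lintegral_meas_le_mul _ (.of_forall fun z => norm_nonneg z)
          (by fun_prop) hq
    _ ≤ ENNReal.ofReal q * ∫⁻ t in Set.Ioi 0,
          (Set.Ioc 0 r).indicator (fun t => C * ENNReal.ofReal (t ^ (q - β - 1))) t := by
        gcongr _ * ?_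
        exact setLIntegral_mono' measurableSet_Ioi htail
    _ = C * ENNReal.ofReal (q / (q - β) * r ^ (q - β)) := by
        rw [lintegral_indicator measurableSet_Ioc, Measure.restrict_restrict measurableSet_Ioc,
          Set.inter_eq_self_of_subset_left Set.Ioc_subset_Ioi_self,
          lintegral_const_mul _ (by fun_prop), lintegral_Ioc_zero_rpow_sub_one (by linarith) hr.le,
          mul_left_comm, ← ENNReal.ofReal_mul hq.le]
        ring_nf

theorem ConditionU.lintegral_rpow_norm_mul_min_sq_le (h : ConditionU ν β C) (hβ : 0 ≤ β)
    {γ r : ℝ} (hγ : γ ≤ 0) (hβγ : β < 2 + γ) (hr : 0 < r) (hr1 : r ≤ 1) :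
    ∫⁻ z, ENNReal.ofReal (‖z‖ ^ γ * min r ‖z‖ ^ 2) ∂ν ≤
      C * ENNReal.ofReal ((1 + (2 + γ) / (2 + γ - β)) * r ^ (2 + γ - β)) := by
  calc ∫⁻ z, ENNReal.ofReal (‖z‖ ^ γ * min r ‖z‖ ^ 2) ∂ν
      ≤ ∫⁻ z, (ENNReal.ofReal (r ^ γ * min r ‖z‖ ^ 2) +
          (ball 0 r).indicator (fun z => ENNReal.ofReal (‖z‖ ^ (2 + γ))) z) ∂ν :=
        lintegral_mono fun z => ofReal_rpow_norm_mul_min_sq_le z hγ hr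
    _ = ENNReal.ofReal (r ^ γ) * ∫⁻ z, ENNReal.ofReal (min r ‖z‖ ^ 2) ∂ν +
          ∫⁻ z in ball 0 r, ENNReal.ofReal (‖z‖ ^ (2 + γ)) ∂ν := by
        simp_rw [ENNReal.ofReal_mul (Real.rpow_nonneg hr.le γ)]
        rw [lintegral_add_left (by fun_prop), lintegral_const_mul _ (by fun_prop),
          lintegral_indicator measurableSet_ball]
    _ ≤ ENNReal.ofReal (r ^ γ) * (C * ENNReal.ofReal (r ^ (2 - β))) +
          C * ENNReal.ofReal ((2 + γ) / (2 + γ - β) * r ^ (2 + γ - β)) := by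
        gcongr
        · exact h r hr hr1
        · exact h.setLIntegral_ball_rpow_norm_le (by linarith) hβγ hr hr1
    _ = C * ENNReal.ofReal ((1 + (2 + γ) / (2 + γ - β)) * r ^ (2 + γ - β)) := by
        have hpow : r ^ γ * r ^ (2 - β) = r ^ (2 + γ - β) := by
          rw [← Real.rpow_add hr]
          ring_nf
        have hq : 0 ≤ (2 + γ) / (2 + γ - β) := div_nonneg (by linarith) (by linarith)
        rw [mul_left_comm, ← ENNReal.ofReal_mul (by positivity), hpow, ← mul_add,
          ← ENNReal.ofReal_add (by positivity) (by positivity)]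
        ring_nf

theorem ConditionU.withDensity_rpow_norm {α₀ α : ℝ} (h : ConditionU ν α₀ C) (hα₀ : 0 ≤ α₀)
    (hα₀α : α₀ ≤ α) (hα : α < 2) :
    ConditionU (ν.withDensity fun x => ENNReal.ofReal ((2 - α) / (2 - α₀) * ‖x‖ ^ (α₀ - α))) α
      (ENNReal.ofReal (4 / (2 - α₀)) * C) := by
  intro r hr hr1
  have hc : 0 ≤ (2 - α) / (2 - α₀) := div_nonneg (by linarith) (by linarith)
  have hbound := h.lintegral_rpow_norm_mul_min_sq_le hα₀ (γ := α₀ - α) (by linarith)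
    (by linarith) hr hr1
  rw [show 2 + (α₀ - α) - α₀ = 2 - α by ring] at hbound
  calc ∫⁻ z, ENNReal.ofReal (min r ‖z‖ ^ 2) ∂ν.withDensity
        (fun x => ENNReal.ofReal ((2 - α) / (2 - α₀) * ‖x‖ ^ (α₀ - α)))
      = ENNReal.ofReal ((2 - α) / (2 - α₀)) *
          ∫⁻ z, ENNReal.ofReal (‖z‖ ^ (α₀ - α) * min r ‖z‖ ^ 2) ∂ν := by
        rw [lintegral_withDensity_eq_lintegral_mul _ (by fun_prop) (by fun_prop),
          ← lintegral_const_mul _ (by fun_prop)]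
        congr 1 with z
        rw [Pi.mul_apply, ← ENNReal.ofReal_mul (by positivity), ← ENNReal.ofReal_mul hc,
          mul_assoc]
    _ ≤ ENNReal.ofReal ((2 - α) / (2 - α₀)) *
          (C * ENNReal.ofReal ((1 + (2 + (α₀ - α)) / (2 - α)) * r ^ (2 - α))) := by
        gcongr
    _ ≤ ENNReal.ofReal (4 / (2 - α₀)) * C * ENNReal.ofReal (r ^ (2 - α)) := by
        rw [mul_left_comm, ← ENNReal.ofReal_mul hc, mul_comm _ C, mul_assoc,
          ← ENNReal.ofReal_mul (div_nonneg zero_le_four (by linarith)), ← mul_assoc]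
        have hconst : (2 - α) / (2 - α₀) * (1 + (2 + (α₀ - α)) / (2 - α)) =
            (4 + α₀ - 2 * α) / (2 - α₀) := by
          field_simp [show 2 - α ≠ 0 by linarith]
          ring
        rw [hconst]
        gcongr <;> linarith

end ConditionU

theorem stmt_7 {d : ℕ} (ν₀ : Measure (EuclideanSpace ℝ (Fin d))) (α₀ α C_U : ℝ)
    (hα₀ : α₀ ∈ Set.Ioo (0 : ℝ) 2) (hα₀α : α₀ ≤ α) (hα : α < 2)
    (hU : ∀ r : ℝ, 0 < r → r ≤ 1 →
      ∫⁻ z, ENNReal.ofReal ((min r ‖z‖) ^ 2) ∂ν₀ ≤ ENNReal.ofReal (C_U * r ^ (2 - α₀))) :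
    ∀ r : ℝ, 0 < r → r ≤ 1 →
      ∫⁻ z, ENNReal.ofReal ((min r ‖z‖) ^ 2)
          ∂(ν₀.withDensity fun x => ENNReal.ofReal ((2 - α) / (2 - α₀) * ‖x‖ ^ (α₀ - α))) ≤
        ENNReal.ofReal (13 * C_U / (2 - α₀) * r ^ (2 - α)) := by
  intro r hr hr1
  have hν₀ : ConditionU ν₀ α₀ (ENNReal.ofReal C_U) := fun r hr hr1 =>
    (hU r hr hr1).trans_eq (ENNReal.ofReal_mul' (Real.rpow_nonneg hr.le _))
  calc _ ≤ ENNReal.ofReal (4 / (2 - α₀)) * ENNReal.ofReal C_U * ENNReal.ofReal (r ^ (2 - α)) :=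
        hν₀.withDensity_rpow_norm hα₀.1.le hα₀α hα r hr hr1
    _ ≤ ENNReal.ofReal (13 / (2 - α₀)) * ENNReal.ofReal C_U * ENNReal.ofReal (r ^ (2 - α)) := by
        gcongr
        · linarith [hα₀.2]
        · norm_num
    _ = ENNReal.ofReal (13 * C_U / (2 - α₀) * r ^ (2 - α)) := by
        rw [← ENNReal.ofReal_mul (div_nonneg (by norm_num) (by linarith [hα₀.2])),
          ← ENNReal.ofReal_mul' (Real.rpow_nonneg hr.le _)]
        ring_nf
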